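/- If N is a normal subgroup of a group G such that both N and the quotient group G/N have finite complete rewriting systems, then G has a finite complete rewriting system. -/

import Mathlib

/-- One step of rewriting: `w` rewrites to `w'` by replacing a factor `u`
(the left-hand side of a rule in `R`) with `v` (the right-hand side). -/
def RewStep {α : Type} (R : Set (FreeMonoid α × FreeMonoid α))
    (w w' : FreeMonoid α) : Prop :=
  ∃ x u v y : FreeMonoid α, (u, v) ∈ R ∧ w = x * u * y ∧ w' = x * v * y

/-- A word is irreducible if it contains no left-hand side of a rule as a factor. -/
def RewIrreducible {α : Type} (R : Set (FreeMonoid α × FreeMonoid α))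
    (w : FreeMonoid α) : Prop :=
  ¬ ∃ x u v y : FreeMonoid α, (u, v) ∈ R ∧ w = x * u * y

/-- `(π, R)` is a complete rewriting system for the group `G`:
(i) the induced monoid homomorphism `A* → G` is surjective and the monoid presented by
`⟨A ∣ u = v, (u,v) ∈ R⟩` maps isomorphically onto `G` (its defining congruence is exactly
the kernel congruence of the evaluation);
(ii) there is no infinite sequence of rewritings (Noetherian);
(iii) every element of `G` has exactly one irreducible representative word. -/
def IsCompleteRewritingSystem {α : Type} {G : Type*} [Group G] (π : α → G)
    (R : Set (FreeMonoid α × FreeMonoid α)) : Prop :=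
  Function.Surjective (FreeMonoid.lift π) ∧
  (∀ u v : FreeMonoid α,
      FreeMonoid.lift π u = FreeMonoid.lift π v ↔
        conGen (fun w w' => (w, w') ∈ R) u v) ∧
  (∀ f : ℕ → FreeMonoid α, ¬ ∀ m : ℕ, RewStep R (f m) (f (m + 1))) ∧
  (∀ g : G, ∃! w : FreeMonoid α, FreeMonoid.lift π w = g ∧ RewIrreducible R w)

/-- A group has a finite complete rewriting system if there are a finite alphabet `α`,
a map `π : α → G` and a finite set of rules `R` forming a complete rewriting system. -/
def HasFiniteCompleteRewritingSystem (G : Type*) [Group G] : Prop :=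
  ∃ (α : Type) (_ : Finite α) (π : α → G)
    (R : Set (FreeMonoid α × FreeMonoid α)),
    R.Finite ∧ IsCompleteRewritingSystem π R

/-!
Let `A` generate `N` with complete system `T`, and let `B` generate `G ⧸ N` with complete
system `S`, each `b ∈ B` being lifted to some `gb b ∈ G`. Over `A ⊕ B` take the rules of `T`,
rules `a b → b · w` moving letters of `A` to the right of letters of `B` (`w` represents
`b⁻¹ a b ∈ N`), and the rules `p → p' · c` of `S`, corrected by a word `c` for `p'⁻¹ p ∈ N`.
The irreducible words are exactly `u z` with `u` irreducible for `S` and `z` for `T`; since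
every element of `G` is uniquely `(lift of u) · n` with `n ∈ N`, this gives unique normal forms.
For termination, an `S`-step decreases the projection to `B*` and the other steps keep it while
decreasing the blocks `[z₀, …, zₖ]` of letters of `A` in shortlex order, where a block decreases
by a `T`-step or by losing its last letter.
-/

namespace RewStep

variable {α : Type} {R : Set (FreeMonoid α × FreeMonoid α)} {w w' : FreeMonoid α}

theorem mul_left (h : RewStep R w w') (c : FreeMonoid α) : RewStep R (c * w) (c * w') := by
  obtain ⟨x, u, v, y, huv, rfl, rfl⟩ := h
  exact ⟨c * x, u, v, y, huv, by simp only [mul_assoc], by simp only [mul_assoc]⟩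

theorem mul_right (h : RewStep R w w') (c : FreeMonoid α) : RewStep R (w * c) (w' * c) := by
  obtain ⟨x, u, v, y, huv, rfl, rfl⟩ := h
  exact ⟨x, u, v, y * c, huv, by simp only [mul_assoc], by simp only [mul_assoc]⟩

theorem of_mem {u v : FreeMonoid α} (h : (u, v) ∈ R) : RewStep R u v :=
  ⟨1, u, v, 1, h, by simp, by simp⟩

theorem rel_key {β : Type*} {r : β → β → Prop} (key : FreeMonoid α → β)
    (hrule : ∀ u v y, (u, v) ∈ R → r (key (v * y)) (key (u * y)))
    (hcons : ∀ c w w', r (key w') (key w) → r (key (.of c * w')) (key (.of c * w)))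
    (h : RewStep R w w') : r (key w') (key w) := by
  obtain ⟨x, u, v, y, huv, rfl, rfl⟩ := h
  induction x using FreeMonoid.inductionOn' with
  | one => simpa only [one_mul] using hrule u v y huv
  | of_mul c x ih => simpa only [mul_assoc] using hcons c _ _ (by simpa only [mul_assoc] using ih)

theorem conGen (h : RewStep R w w') : conGen (fun a b => (a, b) ∈ R) w w' := by
  obtain ⟨x, u, v, y, huv, rfl, rfl⟩ := h
  set c := _root_.conGen fun a b => (a, b) ∈ R
  exact c.mul (c.mul (c.refl x) (ConGen.Rel.of u v huv)) (c.refl y)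

theorem lift_eq {G : Type*} [Monoid G] {π : α → G}
    (hR : ∀ p ∈ R, FreeMonoid.lift π p.1 = FreeMonoid.lift π p.2) (h : RewStep R w w') :
    FreeMonoid.lift π w' = FreeMonoid.lift π w := by
  obtain ⟨x, u, v, y, huv, rfl, rfl⟩ := h
  simp only [map_mul, hR (u, v) huv]

end RewStep

theorem forall_not_chain_iff_wellFounded_flip {X : Type*} {r : X → X → Prop} :
    (∀ f : ℕ → X, ¬ ∀ m, r (f m) (f (m + 1))) ↔ WellFounded (flip r) := by
  rw [wellFounded_iff_isEmpty_descending_chain, isEmpty_subtype]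
  rfl

namespace IsCompleteRewritingSystem

variable {α : Type} {G : Type*} [Group G] {π : α → G} {R : Set (FreeMonoid α × FreeMonoid α)}

theorem lift_eq_of_mem (h : IsCompleteRewritingSystem π R) {p : FreeMonoid α × FreeMonoid α}
    (hp : p ∈ R) : FreeMonoid.lift π p.1 = FreeMonoid.lift π p.2 :=
  (h.2.1 _ _).2 (.of _ _ hp)

theorem wellFounded (h : IsCompleteRewritingSystem π R) : WellFounded (flip (RewStep R)) :=
  forall_not_chain_iff_wellFounded_flip.1 h.2.2.1

theorem exists_lift_coe_eq {N : Subgroup G} {π : α → N} (h : IsCompleteRewritingSystem π R)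
    {g : G} (hg : g ∈ N) : ∃ w, (FreeMonoid.lift π w : G) = g :=
  (h.1 ⟨g, hg⟩).imp fun _ => congrArg Subtype.val

end IsCompleteRewritingSystem

section AbstractRewriting

variable {α : Type} {R : Set (FreeMonoid α × FreeMonoid α)}

theorem rewIrreducible_iff_forall_not_rewStep {w : FreeMonoid α} :
    RewIrreducible R w ↔ ∀ w', ¬ RewStep R w w' := by
  simp only [RewIrreducible, RewStep]
  grind

theorem exists_reflTransGen_rewIrreducible (hR : WellFounded (flip (RewStep R)))
    (w : FreeMonoid α) :
    ∃ w', Relation.ReflTransGen (RewStep R) w w' ∧ RewIrreducible R w' := by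
  induction w using hR.induction with
  | _ w ih =>
  by_cases hw : RewIrreducible R w
  · exact ⟨w, .refl, hw⟩
  obtain ⟨w₁, hw₁⟩ : ∃ w₁, RewStep R w w₁ := by
    simpa [rewIrreducible_iff_forall_not_rewStep] using hw
  obtain ⟨w', hw₁w', hw'⟩ := ih w₁ hw₁
  exact ⟨w', .head hw₁ hw₁w', hw'⟩

/-- Every word reduces to the irreducible representative of its value. -/
theorem isCompleteRewritingSystem_of_wellFounded {G : Type*} [Group G] {π : α → G}
    (hR : ∀ p ∈ R, FreeMonoid.lift π p.1 = FreeMonoid.lift π p.2)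
    (hwf : WellFounded (flip (RewStep R)))
    (hnf : ∀ g : G, ∃! w, FreeMonoid.lift π w = g ∧ RewIrreducible R w) :
    IsCompleteRewritingSystem π R := by
  set c := conGen fun a b : FreeMonoid α => (a, b) ∈ R
  have reduce : ∀ w, ∃ w', c w w' ∧ FreeMonoid.lift π w' = FreeMonoid.lift π w ∧
      RewIrreducible R w' := by
    intro w
    obtain ⟨w', hww', hw'⟩ := exists_reflTransGen_rewIrreducible hwf w
    refine ⟨w', ?_, ?_, hw'⟩ <;> clear hw'
    · induction hww' with
      | refl => exact c.refl w
      | tail _ hstep ih => exact c.trans ih hstep.conGen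
    · induction hww' with
      | refl => rfl
      | tail _ hstep ih => exact (hstep.lift_eq hR).trans ih
  refine ⟨fun g => (hnf g).exists.imp fun _ => And.left, fun u v => ⟨fun huv => ?_, fun huv => ?_⟩,
    forall_not_chain_iff_wellFounded_flip.2 hwf, hnf⟩
  · obtain ⟨u', hu, hu'π, hu'⟩ := reduce u
    obtain ⟨v', hv, hv'π, hv'⟩ := reduce v
    have : u' = v' := (hnf _).unique ⟨hu'π.trans huv, hu'⟩ ⟨hv'π, hv'⟩
    exact c.trans hu (this ▸ c.symm hv)
  · have hle : c ≤ Con.ker (FreeMonoid.lift π) :=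
      Con.conGen_le.2 fun x y hxy => (Con.ker_rel _).2 (hR (x, y) hxy)
    exact (Con.ker_rel _).1 (hle huv)

end AbstractRewriting

def RewStepOrDropLast {α : Type} (R : Set (FreeMonoid α × FreeMonoid α))
    (z' z : FreeMonoid α) : Prop :=
  RewStep R z z' ∨ ∃ a, z = z' * .of a

namespace RewStepOrDropLast

variable {α : Type} {R : Set (FreeMonoid α × FreeMonoid α)}

theorem mul_left {z z' : FreeMonoid α} (h : RewStepOrDropLast R z' z) (c : FreeMonoid α) :
    RewStepOrDropLast R (c * z') (c * z) := by
  rcases h with h | ⟨a, rfl⟩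
  · exact .inl (h.mul_left c)
  · exact .inr ⟨a, (mul_assoc _ _ _).symm⟩

/-- Rules apply in any right context, so a prefix `z` of an accessible word `z * s` is
accessible. -/
theorem wellFounded (hR : WellFounded (flip (RewStep R))) :
    WellFounded (RewStepOrDropLast R) := by
  suffices h : ∀ w z s, z * s = w → Acc (RewStepOrDropLast R) z from
    ⟨fun z => h _ z 1 (mul_one z)⟩
  intro w
  induction w using hR.induction with
  | _ w ihw =>
  intro z
  induction z using (measure FreeMonoid.length).wf.induction with
  | _ z ihz =>
  rintro s rfl
  refine ⟨_, ?_⟩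
  rintro z' (hstep | ⟨a, rfl⟩)
  · exact ihw _ (hstep.mul_right s) z' s rfl
  · exact ihz z'
      (show z'.length < (z' * .of a).length by simp [FreeMonoid.length_mul, FreeMonoid.length_of])
      (.of a * s) (mul_assoc _ _ _).symm

end RewStepOrDropLast

theorem List.Shortlex.modifyHead {α : Type*} {r : α → α → Prop} {f : α → α}
    (hf : ∀ x y, r x y → r (f x) (f y)) {s t : List α} (h : List.Shortlex r s t) :
    List.Shortlex r (s.modifyHead f) (t.modifyHead f) := by
  rw [List.shortlex_def, List.length_modifyHead, List.length_modifyHead] at *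
  refine h.imp_right fun ⟨hlen, hlex⟩ => ⟨hlen, ?_⟩
  cases hlex with
  | nil => exact .nil
  | cons htail => exact .cons htail
  | rel hhead => exact .rel (hf _ _ hhead)

namespace ExtensionRewriting

open FreeMonoid

variable {A B : Type}

def projLeft : FreeMonoid (A ⊕ B) →* FreeMonoid A := lift (Sum.elim of 1)

def projRight : FreeMonoid (A ⊕ B) →* FreeMonoid B := lift (Sum.elim 1 of)

@[simp] theorem projLeft_map_inl (z : FreeMonoid A) : projLeft (map (Sum.inl (β := B)) z) = z :=
  DFunLike.congr_fun (hom_eq (f := projLeft.comp (map Sum.inl)) (g := .id _) fun _ => rfl) z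

@[simp] theorem projLeft_map_inr (u : FreeMonoid B) : projLeft (map (Sum.inr (α := A)) u) = 1 :=
  DFunLike.congr_fun (hom_eq (f := projLeft.comp (map Sum.inr)) (g := 1) fun _ => rfl) u

@[simp] theorem projRight_map_inl (z : FreeMonoid A) : projRight (map (Sum.inl (β := B)) z) = 1 :=
  DFunLike.congr_fun (hom_eq (f := projRight.comp (map Sum.inl)) (g := 1) fun _ => rfl) z

@[simp] theorem projRight_map_inr (u : FreeMonoid B) : projRight (map (Sum.inr (α := A)) u) = u :=
  DFunLike.congr_fun (hom_eq (f := projRight.comp (map Sum.inr)) (g := .id _) fun _ => rfl) u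

@[simp] theorem projRight_of_inl (a : A) : projRight (of (Sum.inl a : A ⊕ B)) = 1 := rfl

@[simp] theorem projRight_of_inr (b : B) : projRight (of (Sum.inr b : A ⊕ B)) = of b := rfl

/-- The maximal factors over `A` of a word over `A ⊕ B`: a word `z₀ b₁ z₁ ⋯ bₖ zₖ` with
`zᵢ ∈ A*` has blocks `[z₀, …, zₖ]`. -/
def blocks : List (A ⊕ B) → List (FreeMonoid A)
  | [] => [1]
  | .inl a :: l => (blocks l).modifyHead (of a * ·)
  | .inr _ :: l => 1 :: blocks l

@[simp] theorem blocks_inl_cons (a : A) (l : List (A ⊕ B)) :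
    blocks (.inl a :: l) = (blocks l).modifyHead (of a * ·) := rfl

@[simp] theorem blocks_inr_cons (b : B) (l : List (A ⊕ B)) :
    blocks (.inr b :: l) = 1 :: blocks l := rfl

theorem blocks_ne_nil (l : List (A ⊕ B)) : blocks l ≠ [] := by
  cases l with
  | nil => simp [blocks]
  | cons c l => cases c <;> simp [blocks_ne_nil l]

@[simp] theorem blocks_map_inl_append (t : FreeMonoid A) (l : List (A ⊕ B)) :
    blocks ((toList t).map Sum.inl ++ l) = (blocks l).modifyHead (t * ·) := by
  induction t using FreeMonoid.inductionOn' with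
  | one => exact (congrFun List.modifyHead_id _).symm
  | of_mul a t ih =>
    simp only [toList_of_mul, List.map_cons, List.cons_append, blocks_inl_cons, ih,
      List.modifyHead_modifyHead]
    simp only [Function.comp_def, mul_assoc]

theorem eq_map_inr_mul_map_inl_or (w : FreeMonoid (A ⊕ B)) :
    (∃ u z, w = map Sum.inr u * map Sum.inl z) ∨
      ∃ x a b y, w = x * (of (.inl a) * of (.inr b)) * y := by
  induction w using FreeMonoid.inductionOn' with
  | one => exact .inl ⟨1, 1, rfl⟩
  | of_mul c w ih =>
    rcases ih with ⟨u, z, rfl⟩ | ⟨x, a, b, y, rfl⟩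
    · cases c with
      | inr b => exact .inl ⟨of b * u, z, by simp [mul_assoc]⟩
      | inl a =>
        cases u with
        | one => exact .inl ⟨1, of a * z, by simp⟩
        | of_mul b u =>
          exact .inr ⟨1, a, b, map Sum.inr u * map Sum.inl z, by simp [mul_assoc]⟩
    · exact .inr ⟨of c * x, a, b, y, by simp [mul_assoc]⟩

theorem map_inr_mul_map_inl_ne (u : FreeMonoid B) (z : FreeMonoid A) (x y : FreeMonoid (A ⊕ B))
    (a : A) (b : B) : map Sum.inr u * map Sum.inl z ≠ x * (of (.inl a) * of (.inr b)) * y := by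
  intro h
  have hsorted : (toList (map Sum.inr u * map Sum.inl z)).Pairwise
      (fun c d : A ⊕ B => c.isLeft → d.isLeft) := by
    simp [toList_mul, toList_map, List.pairwise_append, List.pairwise_map, List.pairwise_of_forall]
  rw [h] at hsorted
  simp [toList_mul, List.pairwise_append] at hsorted

section Rules

variable (T : Set (FreeMonoid A × FreeMonoid A)) (S : Set (FreeMonoid B × FreeMonoid B))
  (conj : A → B → FreeMonoid A) (corr : S → FreeMonoid A)

/-- `conj a b` is meant to represent `b⁻¹ a b`, and `corr ⟨(p, p'), _⟩` the element `p'⁻¹ p`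
of `N`. -/
def extensionRules : Set (FreeMonoid (A ⊕ B) × FreeMonoid (A ⊕ B)) :=
  Prod.map (map Sum.inl) (map Sum.inl) '' T ∪
  Set.range (fun ab : A × B =>
    (of (.inl ab.1) * of (.inr ab.2), of (.inr ab.2) * map Sum.inl (conj ab.1 ab.2))) ∪
  Set.range (fun s : S => (map Sum.inr s.1.1, map Sum.inr s.1.2 * map Sum.inl (corr s)))

theorem extensionRules_finite [Finite A] [Finite B] (hT : T.Finite) (hS : S.Finite) :
    (extensionRules T S conj corr).Finite :=
  have := hS.to_subtype
  ((hT.image _).union (Set.finite_range _)).union (Set.finite_range _)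

variable {T S conj corr}

def terminationKey (w : FreeMonoid (A ⊕ B)) : FreeMonoid B × List (FreeMonoid A) :=
  (projRight w, blocks (toList w))

theorem terminationKey_lt_of_mem {u v : FreeMonoid (A ⊕ B)} (y : FreeMonoid (A ⊕ B))
    (h : (u, v) ∈ extensionRules T S conj corr) :
    Prod.Lex (flip (RewStep S)) (List.Shortlex (RewStepOrDropLast T))
      (terminationKey (v * y)) (terminationKey (u * y)) := by
  simp only [terminationKey, Prod.lex_def, flip]
  rcases h with (⟨⟨t, t'⟩, ht, heq⟩ | ⟨⟨a, b⟩, heq⟩) | ⟨⟨⟨p, p'⟩, hp⟩, heq⟩ <;>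
    simp only [Prod.map, Prod.mk.injEq] at heq <;> obtain ⟨rfl, rfl⟩ := heq
  · obtain ⟨z, l, hzl⟩ := List.exists_cons_of_ne_nil (blocks_ne_nil (toList y))
    simp only [map_mul, projRight_map_inl, one_mul, toList_mul, toList_map, blocks_map_inl_append,
      hzl, List.modifyHead_cons, true_and]
    exact .inr (.of_lex (by simp) (.rel (.inl ((RewStep.of_mem ht).mul_right z))))
  · right
    simp only [map_mul, projRight_of_inl, projRight_of_inr, projRight_map_inl, one_mul, mul_one,
      toList_mul, toList_of, List.cons_append, blocks_inl_cons, blocks_inr_cons, true_and]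
    exact .of_lex (by simp) (.rel (.inr ⟨a, by simp⟩))
  · left
    simpa [mul_assoc] using (RewStep.of_mem hp).mul_right (projRight y)

theorem terminationKey_lt_of_mul_left (c : A ⊕ B) {w w' : FreeMonoid (A ⊕ B)}
    (h : Prod.Lex (flip (RewStep S)) (List.Shortlex (RewStepOrDropLast T))
      (terminationKey w') (terminationKey w)) :
    Prod.Lex (flip (RewStep S)) (List.Shortlex (RewStepOrDropLast T))
      (terminationKey (of c * w')) (terminationKey (of c * w)) := by
  simp only [terminationKey, Prod.lex_def, flip, map_mul, toList_of_mul] at h ⊢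
  rcases h with h | ⟨hproj, hblocks⟩
  · exact .inl (h.mul_left _)
  · refine .inr ⟨hproj ▸ rfl, ?_⟩
    cases c with
    | inl a => exact hblocks.modifyHead fun _ _ h => h.mul_left _
    | inr b => exact hblocks.append_left [1]

theorem wellFounded_extensionRules (hT : WellFounded (flip (RewStep T)))
    (hS : WellFounded (flip (RewStep S))) :
    WellFounded (flip (RewStep (extensionRules T S conj corr))) :=
  Subrelation.wf
    (fun h => RewStep.rel_key terminationKey (fun _ _ y h => terminationKey_lt_of_mem y h)
      (fun c _ _ h => terminationKey_lt_of_mul_left c h) h)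
    (InvImage.wf terminationKey
      (hS.prod_lex (List.Shortlex.wf (RewStepOrDropLast.wellFounded hT))))

theorem rewIrreducible_extensionRules_iff {w : FreeMonoid (A ⊕ B)} :
    RewIrreducible (extensionRules T S conj corr) w ↔
      ∃ u z, w = map Sum.inr u * map Sum.inl z ∧ RewIrreducible S u ∧ RewIrreducible T z := by
  constructor
  · intro hw
    rcases eq_map_inr_mul_map_inl_or w with ⟨u, z, rfl⟩ | ⟨x, a, b, y, rfl⟩
    · refine ⟨u, z, rfl, ?_, ?_⟩
      · rintro ⟨x, p, p', y, hp, rfl⟩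
        refine hw ⟨map Sum.inr x, _, _, map Sum.inr y * map Sum.inl z,
          .inr ⟨⟨(p, p'), hp⟩, rfl⟩, by simp [mul_assoc]⟩
      · rintro ⟨x, t, t', y, ht, rfl⟩
        refine hw ⟨map Sum.inr u * map Sum.inl x, _, _, map Sum.inl y,
          .inl (.inl ⟨(t, t'), ht, rfl⟩), by simp [mul_assoc]⟩
    · exact (hw ⟨x, _, _, y, .inl (.inr ⟨(a, b), rfl⟩), rfl⟩).elim
  · rintro ⟨u, z, rfl, hu, hz⟩ ⟨x, l, r, y, hlr, hw⟩
    rcases hlr with (⟨⟨t, t'⟩, ht, heq⟩ | ⟨⟨a, b⟩, heq⟩) | ⟨⟨⟨p, p'⟩, hp⟩, heq⟩ <;>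
      simp only [Prod.map, Prod.mk.injEq] at heq <;> obtain ⟨rfl, rfl⟩ := heq
    · exact hz ⟨projLeft x, t, t', projLeft y, ht, by simpa using congrArg projLeft hw⟩
    · exact map_inr_mul_map_inl_ne u z x y a b hw
    · exact hu ⟨projRight x, p, p', projRight y, hp, by simpa using congrArg projRight hw⟩

section Group

variable {G : Type*} [Group G] {N : Subgroup G} {πN : A → N} {gb : B → G}

def extensionMap (πN : A → N) (gb : B → G) : A ⊕ B → G :=
  Sum.elim (fun a => (πN a : G)) gb

theorem lift_extensionMap_map_inl (z : FreeMonoid A) :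
    lift (extensionMap πN gb) (map Sum.inl z) = (lift πN z : G) :=
  DFunLike.congr_fun (hom_eq (f := (lift (extensionMap πN gb)).comp (map Sum.inl))
    (g := N.subtype.comp (lift πN)) fun _ => rfl) z

theorem mk_lift_extensionMap_map_inr [N.Normal] {πQ : B → G ⧸ N}
    (hgb : ∀ b, (gb b : G ⧸ N) = πQ b) (u : FreeMonoid B) :
    (lift (extensionMap πN gb) (map Sum.inr u) : G ⧸ N) = lift πQ u :=
  DFunLike.congr_fun (hom_eq (f := (QuotientGroup.mk' N).comp
    ((lift (extensionMap πN gb)).comp (map Sum.inr))) (g := lift πQ) hgb) u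

theorem lift_eq_of_mem_extensionRules
    (hT : ∀ p ∈ T, lift πN p.1 = lift πN p.2)
    (hconj : ∀ a b, (lift πN (conj a b) : G) = (gb b)⁻¹ * πN a * gb b)
    (hcorr : ∀ s : S, lift (extensionMap πN gb) (map Sum.inr s.1.2) * lift πN (corr s) =
      lift (extensionMap πN gb) (map Sum.inr s.1.1)) :
    ∀ p ∈ extensionRules T S conj corr,
      lift (extensionMap πN gb) p.1 = lift (extensionMap πN gb) p.2 := by
  rintro _ ((⟨t, ht, rfl⟩ | ⟨⟨a, b⟩, rfl⟩) | ⟨s, rfl⟩)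
  · simp [lift_extensionMap_map_inl, hT t ht]
  · simp only [map_mul, lift_eval_of, lift_extensionMap_map_inl, hconj]
    simp only [extensionMap, Sum.elim_inl, Sum.elim_inr]
    group
  · simp [lift_extensionMap_map_inl, hcorr]

/-- The irreducible word representing `g` is `u z`, where `u` represents `g N` and `z`
represents the remaining factor in `N`. -/
theorem existsUnique_rewIrreducible_extensionRules [N.Normal] {πQ : B → G ⧸ N}
    (hgb : ∀ b, (gb b : G ⧸ N) = πQ b)
    (hT : ∀ n : N, ∃! z, lift πN z = n ∧ RewIrreducible T z)
    (hS : ∀ q : G ⧸ N, ∃! u, lift πQ u = q ∧ RewIrreducible S u) (g : G) :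
    ∃! w, lift (extensionMap πN gb) w = g ∧ RewIrreducible (extensionRules T S conj corr) w := by
  set π := lift (extensionMap πN gb)
  have hmk : ∀ u z, (π (map Sum.inr u * map Sum.inl z) : G ⧸ N) = lift πQ u := by
    intro u z
    simp [π, lift_extensionMap_map_inl, mk_lift_extensionMap_map_inr hgb]
  obtain ⟨u, ⟨hu, huirr⟩, -⟩ := hS g
  have hmem : (π (map Sum.inr u))⁻¹ * g ∈ N := by
    rw [← QuotientGroup.eq_one_iff, QuotientGroup.mk_mul, QuotientGroup.mk_inv,
      mk_lift_extensionMap_map_inr hgb, hu, inv_mul_cancel]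
  obtain ⟨z, ⟨hz, hzirr⟩, -⟩ := hT ⟨_, hmem⟩
  refine ⟨map Sum.inr u * map Sum.inl z, ⟨?_, rewIrreducible_extensionRules_iff.2
    ⟨u, z, rfl, huirr, hzirr⟩⟩, ?_⟩
  · simp [π, lift_extensionMap_map_inl, hz]
  rintro w ⟨rfl, hw⟩
  obtain ⟨u', z', rfl, hu'irr, hz'irr⟩ := rewIrreducible_extensionRules_iff.1 hw
  obtain rfl : u' = u := (hS _).unique ⟨(hmk u' z').symm, hu'irr⟩ ⟨hu, huirr⟩
  have hz' : lift πN z' = ⟨_, hmem⟩ := Subtype.ext (by simp [π, lift_extensionMap_map_inl])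
  rw [(hT _).unique ⟨hz', hz'irr⟩ ⟨hz, hzirr⟩]

theorem isCompleteRewritingSystem_extensionRules [N.Normal] {πQ : B → G ⧸ N}
    (hT : IsCompleteRewritingSystem πN T) (hS : IsCompleteRewritingSystem πQ S)
    (hgb : ∀ b, (gb b : G ⧸ N) = πQ b)
    (hconj : ∀ a b, (lift πN (conj a b) : G) = (gb b)⁻¹ * πN a * gb b)
    (hcorr : ∀ s : S, lift (extensionMap πN gb) (map Sum.inr s.1.2) * lift πN (corr s) =
      lift (extensionMap πN gb) (map Sum.inr s.1.1)) :
    IsCompleteRewritingSystem (extensionMap πN gb) (extensionRules T S conj corr) :=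
  isCompleteRewritingSystem_of_wellFounded
    (lift_eq_of_mem_extensionRules (fun _ hp => hT.lift_eq_of_mem hp) hconj hcorr)
    (wellFounded_extensionRules hT.wellFounded hS.wellFounded)
    (existsUnique_rewIrreducible_extensionRules hgb hT.2.2.2 hS.2.2.2)

end Group

end Rules

end ExtensionRewriting

open ExtensionRewriting FreeMonoid in
/-- If N is normal in G and both N and G/N have finite complete
rewriting systems, then so does G. -/
theorem extension_hasFiniteCompleteRewritingSystem
    (G : Type) [Group G] (N : Subgroup G) [N.Normal]
    (hN : HasFiniteCompleteRewritingSystem N)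
    (hQ : HasFiniteCompleteRewritingSystem (G ⧸ N)) :
    HasFiniteCompleteRewritingSystem G := by
  obtain ⟨A, _, πN, T, hTfin, hT⟩ := hN
  obtain ⟨B, _, πQ, S, hSfin, hS⟩ := hQ
  set gb : B → G := fun b => (πQ b).out
  have hgb : ∀ b, (gb b : G ⧸ N) = πQ b := fun b => QuotientGroup.out_eq' (πQ b)
  set π := lift (extensionMap πN gb)
  have hconj : ∀ a b, ∃ c, (lift πN c : G) = (gb b)⁻¹ * πN a * gb b := fun a b =>
    hT.exists_lift_coe_eq (Subgroup.Normal.conj_mem' ‹_› _ (πN a).2 (gb b))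
  have hcorr : ∀ s : S, ∃ c, π (map Sum.inr s.1.2) * lift πN c = π (map Sum.inr s.1.1) := by
    intro s
    have hmem : (π (map Sum.inr s.1.2))⁻¹ * π (map Sum.inr s.1.1) ∈ N := by
      rw [← QuotientGroup.eq, mk_lift_extensionMap_map_inr hgb, mk_lift_extensionMap_map_inr hgb,
        hS.lift_eq_of_mem s.2]
    obtain ⟨c, hc⟩ := hT.exists_lift_coe_eq hmem
    exact ⟨c, by rw [hc, mul_inv_cancel_left]⟩
  choose conj hconj using hconj
  choose corr hcorr using hcorr
  exact ⟨A ⊕ B, inferInstance, extensionMap πN gb, extensionRules T S conj corr,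
    extensionRules_finite T S conj corr hTfin hSfin,
    isCompleteRewritingSystem_extensionRules hT hS hgb hconj hcorr⟩
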